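/- Let S be a seminormal affine monoid with cone C and p a prime. A face D ⊊ C is a maximal p-face (D is a p-face and no strictly larger face is a p-face) if and only if D is a maximal pRUF. -/

import Mathlib

noncomputable section


noncomputable section

def emb (d : ℕ) : (Fin d → ℤ) →+ (Fin d → ℝ) where
  toFun m := fun i => (m i : ℝ)
  map_zero' := by ext i; simp
  map_add' x y := by ext i; simp [Pi.add_apply]

def IsFace (d : ℕ) (C D : Set (Fin d → ℝ)) : Prop :=
  ∃ u : (Fin d → ℝ) →ₗ[ℝ] ℝ, (∀ x ∈ C, 0 ≤ u x) ∧ D = {x ∈ C | u x = 0}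

def latticeOf (d : ℕ) (S : AddSubmonoid (Fin d → ℤ)) (D : Set (Fin d → ℝ)) :
    AddSubgroup (Fin d → ℤ) :=
  AddSubgroup.closure ((S : Set (Fin d → ℤ)) ∩ (emb d) ⁻¹' D)

def latIn (d : ℕ) (D : Set (Fin d → ℝ)) : AddSubgroup (Fin d → ℤ) :=
  AddSubgroup.comap (emb d) (Submodule.span ℝ D).toAddSubgroup

def IsRelSat (d : ℕ) (S : AddSubmonoid (Fin d → ℤ)) (C D : Set (Fin d → ℝ)) : Prop :=
  IsFace d C D ∧ D ≠ C ∧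
    latticeOf d S D =
      (⨅ D' ∈ {D' : Set (Fin d → ℝ) | IsFace d C D' ∧ D ⊂ D'}, latticeOf d S D') ⊓ latIn d D

def IsRUF (d : ℕ) (S : AddSubmonoid (Fin d → ℤ)) (C D : Set (Fin d → ℝ)) : Prop :=
  IsFace d C D ∧ ¬ IsRelSat d S C D

def Seminormal (d : ℕ) (S : AddSubmonoid (Fin d → ℤ)) (C : Set (Fin d → ℝ)) : Prop :=
  ∀ D : Set (Fin d → ℝ), IsFace d C D →
    ∀ m : Fin d → ℤ, emb d m ∈ intrinsicInterior ℝ D → (m ∈ S ↔ m ∈ latticeOf d S D)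

def coneOf (d : ℕ) (S : AddSubmonoid (Fin d → ℤ)) : Set (Fin d → ℝ) :=
  ↑(Submodule.span NNReal (emb d '' (S : Set (Fin d → ℤ))))

def pFace (d p : ℕ) (S : AddSubmonoid (Fin d → ℤ)) (D : Set (Fin d → ℝ)) : Prop :=
  p ∣ (latticeOf d S D).relIndex (latIn d D)

def Mtilde (d p : ℕ) (S : AddSubmonoid (Fin d → ℤ)) (D : Set (Fin d → ℝ)) : Set (Fin d → ℤ) :=
  {x | x ∈ latIn d D ∧ ∃ m : ℤ, IsCoprime m (p : ℤ) ∧ m • x ∈ latticeOf d S D}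

/-!
If `y ∈ M ∩ span D` has order `p` modulo `M_D` (Cauchy), then for every face `D' ⊋ D` that is
not a `p`-face both `p` and the index `[M ∩ span D' : M_{D'}]` kill `y` modulo `M_{D'}`, so
`y ∈ M_{D'}`. Hence a relatively saturated face is not a maximal `p`-face, i.e. every maximal
`p`-face is a pRUF. Conversely every `p`-face lies in a maximal one (take one of maximal span),
which is then a pRUF; so a maximal pRUF has no strictly larger `p`-face.

Cauchy's theorem needs `[M ∩ span D : M_D]` to be finite (`p ∣ 0` holds for the junk value of
`relIndex`). This holds because `D` lies in the real span of `S ∩ D`, and a lattice point in the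
real span of lattice points has a nonzero multiple in the group they generate.
-/

open Submodule

section Descent

variable {ι : Type*}

theorem mem_span_of_algebraMap_comp_mem_span [Fintype ι] {K L : Type*} [Field K] [Field L]
    [Algebra K L] {s : Set (ι → K)} {v : ι → K}
    (h : algebraMap K L ∘ v ∈ span L ((algebraMap K L ∘ ·) '' s)) : v ∈ span K s := by
  classical
  by_contra hv
  obtain ⟨φ, hφv, hφs⟩ := exists_le_ker_of_notMem hv
  -- the `L`-linear extension of `φ`
  let ψ : (ι → L) →ₗ[L] L :=
    ∑ i, algebraMap K L (φ fun j => if i = j then 1 else 0) • LinearMap.proj i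
  have hψ (u : ι → K) : ψ (algebraMap K L ∘ u) = algebraMap K L (φ u) := by
    rw [LinearMap.pi_apply_eq_sum_univ φ u, map_sum]
    simp [ψ, Algebra.smul_def, mul_comm]
  have hspan : span L ((algebraMap K L ∘ ·) '' s) ≤ LinearMap.ker ψ := by
    rw [span_le]
    rintro _ ⟨u, hu, rfl⟩
    simp [hψ, LinearMap.mem_ker.1 (hφs (subset_span hu))]
  exact hφv <| (algebraMap K L).injective <| by simpa [hψ] using hspan h

theorem exists_zsmul_mem_closure_of_intCast_mem_span_rat {s : Set (ι → ℤ)} {v : ι → ℤ}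
    (h : ((↑) ∘ v : ι → ℚ) ∈ span ℚ ((((↑) : ℤ → ℚ) ∘ ·) '' s)) :
    ∃ n : ℤ, n ≠ 0 ∧ n • v ∈ AddSubgroup.closure s := by
  let f : (ι → ℤ) →ₗ[ℤ] (ι → ℚ) := ((Int.castAddHom ℚ).compLeft ι).toIntLinearMap
  have hf : Function.Injective f := fun a b hab => funext fun i => by
    simpa [f] using congrFun hab i
  obtain ⟨y, hy, ⟨z, hz⟩, hvy⟩ := (IsLocalization.mem_span_iff (nonZeroDivisors ℤ)).1 h
  rw [show (((↑) : ℤ → ℚ) ∘ ·) '' s = f '' s from rfl, span_image] at hy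
  obtain ⟨w, hw, rfl⟩ := hy
  refine ⟨z, nonZeroDivisors.ne_zero hz, ?_⟩
  have hzv : f (z • v) = f w := by
    rw [map_zsmul, ← Int.cast_smul_eq_zsmul ℚ, show f v = _ from hvy, smul_smul,
      IsFractionRing.mk'_eq_div]
    simp [nonZeroDivisors.ne_zero hz]
  rw [hf hzv, ← span_int_eq_addSubgroupClosure]
  exact hw

theorem exists_zsmul_mem_closure_of_intCast_mem_span_real [Fintype ι] {s : Set (ι → ℤ)}
    {v : ι → ℤ} (h : ((↑) ∘ v : ι → ℝ) ∈ span ℝ ((((↑) : ℤ → ℝ) ∘ ·) '' s)) :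
    ∃ n : ℤ, n ≠ 0 ∧ n • v ∈ AddSubgroup.closure s := by
  refine exists_zsmul_mem_closure_of_intCast_mem_span_rat <|
    mem_span_of_algebraMap_comp_mem_span (L := ℝ) ?_
  rw [Set.image_image]
  convert h using 3 <;> ext <;> simp

end Descent

namespace AddSubgroup

variable {A : Type*} [AddCommGroup A] {H K : AddSubgroup A}

theorem relIndex_ne_zero_of_forall_exists_zsmul_mem [AddGroup.FG K]
    (h : ∀ x ∈ K, ∃ n : ℤ, n ≠ 0 ∧ n • x ∈ H) : H.relIndex K ≠ 0 := by
  have : Finite (K ⧸ H.addSubgroupOf K) := by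
    refine AddCommGroup.finite_of_fg_isAddTorsion _ ?_
    rintro ⟨x, hx⟩
    obtain ⟨n, hn, hnx⟩ := h x hx
    exact isOfFinAddOrder_iff_zsmul_eq_zero.2 ⟨n, hn, (QuotientAddGroup.eq_zero_iff _).2 hnx⟩
  exact index_ne_zero_of_finite

theorem exists_nsmul_mem_of_prime_dvd_relIndex {p : ℕ} (hp : p.Prime) (hHK : H.relIndex K ≠ 0)
    (hpHK : p ∣ H.relIndex K) : ∃ y ∈ K, y ∉ H ∧ p • y ∈ H := by
  have : Finite (K ⧸ H.addSubgroupOf K) := Nat.finite_of_card_ne_zero hHK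
  have : Fact p.Prime := ⟨hp⟩
  obtain ⟨q, hq⟩ := exists_prime_addOrderOf_dvd_card' p hpHK
  obtain ⟨⟨y, hy⟩, rfl⟩ := QuotientAddGroup.mk_surjective q
  refine ⟨y, hy, fun hyH => hp.ne_one ?_, ?_⟩
  · rw [← hq, (QuotientAddGroup.eq_zero_iff _).2 (mem_addSubgroupOf.2 hyH), addOrderOf_zero]
  · have := addOrderOf_nsmul_eq_zero (QuotientAddGroup.mk (s := H.addSubgroupOf K) ⟨y, hy⟩)
    rw [hq, ← QuotientAddGroup.mk_nsmul, QuotientAddGroup.eq_zero_iff] at this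
    exact mem_addSubgroupOf.1 this

theorem mem_of_nsmul_mem_of_coprime {m n : ℕ} (hmn : m.Coprime n) {x : A} (hm : m • x ∈ H)
    (hn : n • x ∈ H) : x ∈ H := by
  obtain ⟨a, b, hab⟩ := Nat.isCoprime_iff_coprime.2 hmn
  have : x = a • (m • x) + b • (n • x) := by
    rw [← natCast_zsmul, ← natCast_zsmul, smul_smul, smul_smul, ← add_smul, hab, one_smul]
  rw [this]
  exact add_mem (zsmul_mem hm a) (zsmul_mem hn b)

end AddSubgroup

section Faces

variable {d p : ℕ} {S : AddSubmonoid (Fin d → ℤ)} {C D : Set (Fin d → ℝ)}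

theorem IsFace.subset (hD : IsFace d C D) : D ⊆ C := by
  obtain ⟨u, -, rfl⟩ := hD
  exact Set.sep_subset _ _

theorem latticeOf_mono (S : AddSubmonoid (Fin d → ℤ)) {D D' : Set (Fin d → ℝ)}
    (h : D ⊆ D') : latticeOf d S D ≤ latticeOf d S D' :=
  AddSubgroup.closure_mono (Set.inter_subset_inter_right _ (Set.preimage_mono h))

theorem latIn_mono {D D' : Set (Fin d → ℝ)} (h : D ⊆ D') : latIn d D ≤ latIn d D' :=
  AddSubgroup.comap_mono (toAddSubgroup_mono (span_mono h))

instance (D : Set (Fin d → ℝ)) : AddGroup.FG (latIn d D) :=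
  Module.Finite.iff_addGroup_fg.1 (inferInstanceAs (Module.Finite ℤ (latIn d D).toIntSubmodule))

theorem IsFace.span_lt_span {D' : Set (Fin d → ℝ)} (hD : IsFace d C D) (hD' : IsFace d C D')
    (h : D ⊂ D') : span ℝ D < span ℝ D' := by
  obtain ⟨u, -, rfl⟩ := hD
  obtain ⟨x, hxD', hxD⟩ := Set.exists_of_ssubset h
  have hux : u x ≠ 0 := fun hux => hxD ⟨hD'.subset hxD', hux⟩
  refine (span_mono h.le).lt_of_ne fun heq => hux ?_
  have hker : span ℝ {x ∈ C | u x = 0} ≤ LinearMap.ker u := span_le.2 fun z hz => hz.2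
  exact hker (heq ▸ subset_span hxD')

theorem IsFace.subset_span_image_inter (hC : C = coneOf d S) (hD : IsFace d C D) :
    D ⊆ span ℝ (emb d '' ((S : Set (Fin d → ℤ)) ∩ emb d ⁻¹' D)) := by
  obtain ⟨u, hu, rfl⟩ := hD
  rintro y ⟨hyC, huy⟩
  have hC' : ∀ z ∈ span NNReal (emb d '' S), z ∈ C := fun z hz => hC ▸ hz
  rw [hC] at hyC
  induction hyC using Submodule.span_induction with
  | mem z hz =>
    obtain ⟨s, hs, rfl⟩ := hz
    exact subset_span ⟨s, ⟨hs, hC' _ (subset_span ⟨s, hs, rfl⟩), huy⟩, rfl⟩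
  | zero => exact zero_mem _
  | add a b ha hb iha ihb =>
    rw [map_add] at huy
    have hua := hu a (hC' a ha)
    have hub := hu b (hC' b hb)
    exact add_mem (iha (by linarith)) (ihb (by linarith))
  | smul c a ha iha =>
    rw [NNReal.smul_def, map_smul, smul_eq_mul] at huy
    rcases mul_eq_zero.1 huy with hc | hua
    · simp [NNReal.smul_def, hc]
    · exact smul_mem _ _ (iha hua)

theorem IsFace.relIndex_latticeOf_latIn_ne_zero (hC : C = coneOf d S) (hD : IsFace d C D) :
    (latticeOf d S D).relIndex (latIn d D) ≠ 0 :=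
  AddSubgroup.relIndex_ne_zero_of_forall_exists_zsmul_mem fun _ hx =>
    exists_zsmul_mem_closure_of_intCast_mem_span_real <|
      span_le.2 (hD.subset_span_image_inter hC) hx

theorem IsFace.isRUF_of_maximal_pFace (hp : p.Prime) (hC : C = coneOf d S) (hD : IsFace d C D)
    (hpD : pFace d p S D) (hmax : ∀ E, IsFace d C E → D ⊂ E → ¬ pFace d p S E) :
    IsRUF d S C D := by
  refine ⟨hD, fun ⟨_, _, hsat⟩ => ?_⟩
  obtain ⟨y, hyD, hyL, hpy⟩ := AddSubgroup.exists_nsmul_mem_of_prime_dvd_relIndex hp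
    (hD.relIndex_latticeOf_latIn_ne_zero hC) hpD
  refine hyL (hsat ▸ AddSubgroup.mem_inf.2 ⟨?_, hyD⟩)
  refine AddSubgroup.mem_iInf.2 fun E => AddSubgroup.mem_iInf.2 fun ⟨hE, hDE⟩ => ?_
  exact AddSubgroup.mem_of_nsmul_mem_of_coprime
    ((Nat.Prime.coprime_iff_not_dvd hp).2 (hmax E hE hDE)) (latticeOf_mono S hDE.le hpy)
    (AddSubgroup.nsmul_relIndex_mem _ (latIn_mono hDE.le hyD))

theorem IsFace.exists_maximal_pFace_superset (hD : IsFace d C D) (hpD : pFace d p S D) :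
    ∃ E, IsFace d C E ∧ pFace d p S E ∧ D ⊆ E ∧
      ∀ F, IsFace d C F → E ⊂ F → ¬ pFace d p S F := by
  obtain ⟨E, ⟨hE, hpE, hDE⟩, hmax⟩ :=
    (InvImage.wf (fun E => span ℝ E) wellFounded_gt).has_min
      {E | IsFace d C E ∧ pFace d p S E ∧ D ⊆ E} ⟨D, hD, hpD, subset_rfl⟩
  exact ⟨E, hE, hpE, hDE, fun F hF hEF hpF =>
    hmax F ⟨hF, hpF, hDE.trans hEF.le⟩ (hE.span_lt_span hF hEF)⟩

end Faces

theorem stmt_8_general (d : ℕ) (p : ℕ) (hp : p.Prime)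
    (S : AddSubmonoid (Fin d → ℤ))
    (C : Set (Fin d → ℝ)) (hC : C = coneOf d S)
    (D : Set (Fin d → ℝ)) (hD : IsFace d C D) :
    (pFace d p S D ∧ ∀ D' : Set (Fin d → ℝ), IsFace d C D' → D ⊂ D' → ¬ pFace d p S D')
      ↔ ((IsRUF d S C D ∧ pFace d p S D) ∧
          ∀ D' : Set (Fin d → ℝ), IsRUF d S C D' ∧ pFace d p S D' → ¬ D ⊂ D') := by
  constructor
  · rintro ⟨hpD, hmax⟩
    exact ⟨⟨hD.isRUF_of_maximal_pFace hp hC hpD hmax, hpD⟩,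
      fun D' ⟨⟨hD', _⟩, hpD'⟩ hDD' => hmax D' hD' hDD' hpD'⟩
  · rintro ⟨⟨-, hpD⟩, hmaxRUF⟩
    refine ⟨hpD, fun D' hD' hDD' hpD' => ?_⟩
    obtain ⟨E, hE, hpE, hD'E, hmaxE⟩ := hD'.exists_maximal_pFace_superset hpD'
    exact hmaxRUF E ⟨hE.isRUF_of_maximal_pFace hp hC hpE hmaxE, hpE⟩ (hDD'.trans_subset hD'E)

/-- In a seminormal affine monoid with pointed cone `C` and prime `p`: a proper face
`D ⊊ C` is a maximal `p`-face (a `p`-face such that no strictly larger face is a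
`p`-face) if and only if `D` is a maximal pRUF (a relatively unsaturated `p`-face not
properly contained in any pRUF). -/
theorem stmt_8 (d : ℕ) (p : ℕ) (hp : p.Prime)
    (S : AddSubmonoid (Fin d → ℤ)) (hfg : S.FG)
    (hZ : AddSubgroup.closure (S : Set (Fin d → ℤ)) = ⊤)
    (C : Set (Fin d → ℝ)) (hC : C = coneOf d S)
    (hpointed : ∀ x ∈ C, -x ∈ C → x = 0)
    (hsn : Seminormal d S C)
    (D : Set (Fin d → ℝ)) (hD : IsFace d C D) (hne : D ≠ C) :
    (pFace d p S D ∧ ∀ D' : Set (Fin d → ℝ), IsFace d C D' → D ⊂ D' → ¬ pFace d p S D')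
      ↔ ((IsRUF d S C D ∧ pFace d p S D) ∧
          ∀ D' : Set (Fin d → ℝ), IsRUF d S C D' ∧ pFace d p S D' → ¬ D ⊂ D') :=
  stmt_8_general d p hp S C hC D hD
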